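/- arXiv:0807.4503 — 2 statements merged into one kernel-verified Lean document; each statement's English description precedes it below -/
import Mathlib

section
/- For every point ξ in the unit disk with ξ ≠ 0, the function z ↦ log(1/(1−z·\bar{ξ}/|ξ|)) belongs to F_0 and has F_0-norm equal to 1. -/
open MeasureTheory Metric Set Complex

noncomputable section

/-- A complex Borel measure on the unit circle, given by its polar decomposition:
a finite nonnegative measure (the total variation) together with a unimodular density. -/
structure CircleMeasure where
  ν : Measure (Metric.sphere (0:ℂ) 1)
  finite : IsFiniteMeasure ν
  w : Metric.sphere (0:ℂ) 1 → ℂ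
  w_meas : Measurable w
  w_norm : ∀ ζ, ‖w ζ‖ = 1

/-- Integral of a function against a complex measure. -/
def CircleMeasure.integral (μ : CircleMeasure) (f : Metric.sphere (0:ℂ) 1 → ℂ) : ℂ :=
  ∫ ζ, f ζ * μ.w ζ ∂μ.ν

/-- Total variation norm of a complex measure. -/
def CircleMeasure.norm (μ : CircleMeasure) : ℝ := (μ.ν Set.univ).toReal

/-- `μ` represents `g` in `F₀`: `g z = g 0 + ∫_T log(1/(1 - conj ζ · z)) dμ(ζ)` on the disk. -/
def RepF0 (g : ℂ → ℂ) (μ : CircleMeasure) : Prop :=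
  ∀ z ∈ ball (0:ℂ) 1,
    g z = g 0 + μ.integral (fun ζ => Complex.log (1 / (1 - (starRingEnd ℂ) (ζ:ℂ) * z)))

/-- Membership in the space `F₀`. -/
def MemF0 (g : ℂ → ℂ) : Prop :=
  DifferentiableOn ℂ g (ball 0 1) ∧ ∃ μ : CircleMeasure, RepF0 g μ

/-- The `F₀` norm: infimum of total variations of representing measures. -/
def normF0 (g : ℂ → ℂ) : ℝ := sInf {c | ∃ μ : CircleMeasure, RepF0 g μ ∧ μ.norm = c}

/-- `f` is a multiplier of `F₀`. -/
def MemM0 (f : ℂ → ℂ) : Prop :=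
  DifferentiableOn ℂ f (ball 0 1) ∧ ∀ g, MemF0 g → MemF0 (fun z => f z * g z)

/-- The multiplier norm on `m₀`. -/
def normM0 (f : ℂ → ℂ) : ℝ :=
  sSup {c | ∃ g, MemF0 g ∧ normF0 g ≤ 1 ∧ normF0 (fun z => f z * g z) = c}

/-- The `H^∞` norm: supremum of `‖f‖` on the unit disk. -/
def normHinf (f : ℂ → ℂ) : ℝ := sSup {c | ∃ z ∈ ball (0:ℂ) 1, ‖f z‖ = c}

/-!
The Dirac mass at `η` represents `z ↦ log(1/(1 - conj η · z))`, so its `F₀`-norm is at most `1`.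
Conversely, if `μ` represents it, evaluating at `z = (1 - t) η` gives
`log(1/t) = ∫ log(1/(1 - conj ζ · z)) dμ(ζ)`, and the integrand is bounded by `log(1/t) + π`
for `t ≤ 1/2`. Hence `L ≤ (L + π) ‖μ‖` for all `L = log(1/t) ≥ log 2`, which forces `‖μ‖ ≥ 1`.
-/

open ComplexConjugate

lemma Complex.norm_log_le_abs_log_norm_add_pi (u : ℂ) : ‖log u‖ ≤ |Real.log ‖u‖| + Real.pi := by
  calc ‖log u‖ ≤ ‖(Real.log ‖u‖ : ℂ)‖ + ‖(arg u : ℂ) * I‖ := norm_add_le _ _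
    _ ≤ |Real.log ‖u‖| + Real.pi := by
      simpa [Complex.norm_real] using abs_arg_le_pi u

lemma norm_log_one_div_one_sub_le {w : ℂ} {t : ℝ} (ht : 0 < t) (ht_half : t ≤ 1 / 2)
    (hw : ‖w‖ ≤ 1 - t) : ‖log (1 / (1 - w))‖ ≤ -Real.log t + Real.pi := by
  have h_lower : t ≤ ‖1 - w‖ := by
    have := norm_sub_norm_le (1 : ℂ) w
    rw [norm_one] at this
    linarith
  have h_upper : ‖1 - w‖ ≤ 2 := by
    have := norm_sub_le (1 : ℂ) w
    rw [norm_one] at this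
    linarith
  have h_log_half : Real.log t ≤ -Real.log 2 := by
    rw [← Real.log_inv]
    exact Real.log_le_log ht (by linarith)
  have h_abs : |Real.log ‖1 / (1 - w)‖| ≤ -Real.log t := by
    rw [norm_div, norm_one, one_div, Real.log_inv, abs_neg, abs_le]
    constructor
    · linarith [Real.log_le_log ht h_lower]
    · linarith [Real.log_le_log (ht.trans_le h_lower) h_upper]
  linarith [norm_log_le_abs_log_norm_add_pi (1 / (1 - w))]

lemma one_le_of_forall_le_add_mul {a c N : ℝ} (h : ∀ L, a ≤ L → L ≤ (L + c) * N) : 1 ≤ N := by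
  by_contra! hN
  set L := max a (c * N / (1 - N) + 1)
  have hL : c * N / (1 - N) + 1 ≤ L := le_max_right _ _
  have h1N : 0 < 1 - N := by linarith
  have : c * N + (1 - N) ≤ L * (1 - N) := by
    calc c * N + (1 - N) = (c * N / (1 - N) + 1) * (1 - N) := by field_simp
      _ ≤ L * (1 - N) := mul_le_mul_of_nonneg_right hL h1N.le
  linarith [h L (le_max_left _ _)]

namespace CircleMeasure

lemma norm_integral_le (μ : CircleMeasure) {f : sphere (0 : ℂ) 1 → ℂ} {C : ℝ}
    (hf : ∀ ζ, ‖f ζ‖ ≤ C) : ‖μ.integral f‖ ≤ C * μ.norm := by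
  have := μ.finite
  rw [integral, norm, ← measureReal_def]
  refine norm_integral_le_of_norm_le_const (Filter.Eventually.of_forall fun ζ => ?_)
  rw [norm_mul, μ.w_norm, mul_one]
  exact hf ζ

def dirac (η : sphere (0 : ℂ) 1) : CircleMeasure where
  ν := Measure.dirac η
  finite := inferInstance
  w := fun _ => 1
  w_meas := measurable_const
  w_norm := fun _ => norm_one

lemma integral_dirac (η : sphere (0 : ℂ) 1) (f : sphere (0 : ℂ) 1 → ℂ) :
    (dirac η).integral f = f η := by
  simp only [integral, dirac, mul_one]
  exact MeasureTheory.integral_dirac f η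

lemma norm_dirac (η : sphere (0 : ℂ) 1) : (dirac η).norm = 1 := by
  simp [norm, dirac]

end CircleMeasure

def logKernel (η z : ℂ) : ℂ := log (1 / (1 - conj η * z))

lemma logKernel_zero (η : ℂ) : logKernel η 0 = 0 := by
  simp [logKernel]

lemma logKernel_one_sub_mul_self {η : ℂ} (hη : ‖η‖ = 1) (t : ℝ) (ht : 0 < t) :
    logKernel η ((1 - t : ℝ) * η) = (-Real.log t : ℝ) := by
  have h : conj η * ((1 - t : ℝ) * η) = (1 - t : ℝ) := by
    rw [mul_left_comm, mul_comm (conj η), mul_conj', hη]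
    simp
  rw [logKernel, h, ofReal_sub, ofReal_one, sub_sub_cancel, ← ofReal_one, ← ofReal_div,
    ← ofReal_log (by positivity), one_div, Real.log_inv]

lemma differentiableOn_logKernel {η : ℂ} (hη : ‖η‖ ≤ 1) :
    DifferentiableOn ℂ (logKernel η) (ball 0 1) := by
  intro z hz
  have hw : ‖conj η * z‖ < 1 := by
    rw [norm_mul, RCLike.norm_conj]
    exact (mul_le_of_le_one_left (norm_nonneg z) hη).trans_lt (mem_ball_zero_iff.mp hz)
  have h_re : 0 < (1 - conj η * z).re := by
    rw [sub_re, one_re]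
    linarith [re_le_norm (conj η * z)]
  have h_ne : 1 - conj η * z ≠ 0 := fun h => by simp [h] at h_re
  have h_slit : 1 / (1 - conj η * z) ∈ slitPlane := by
    rw [mem_slitPlane_iff, one_div, inv_re]
    exact Or.inl (div_pos h_re (normSq_pos.mpr h_ne))
  refine DifferentiableAt.differentiableWithinAt (DifferentiableAt.clog ?_ h_slit)
  exact (differentiableAt_const _).div (by fun_prop) h_ne

lemma repF0_logKernel_dirac (η : sphere (0 : ℂ) 1) :
    RepF0 (logKernel η) (CircleMeasure.dirac η) := by
  intro z _
  rw [CircleMeasure.integral_dirac, logKernel_zero, zero_add, logKernel]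

lemma memF0_logKernel (η : sphere (0 : ℂ) 1) : MemF0 (logKernel η) :=
  ⟨differentiableOn_logKernel (norm_eq_of_mem_sphere η).le, _, repF0_logKernel_dirac η⟩

lemma neg_log_le_mul_norm_of_repF0_logKernel {η : ℂ} (hη : ‖η‖ = 1) {μ : CircleMeasure}
    (hμ : RepF0 (logKernel η) μ) {t : ℝ} (ht : 0 < t) (ht_half : t ≤ 1 / 2) :
    -Real.log t ≤ (-Real.log t + Real.pi) * μ.norm := by
  set z : ℂ := (1 - t : ℝ) * η
  have hz : ‖z‖ = 1 - t := by
    rw [norm_mul, hη, mul_one, norm_real, Real.norm_of_nonneg (by linarith)]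
  have hrep := hμ z (mem_ball_zero_iff.mpr (by linarith))
  rw [logKernel_zero, zero_add, logKernel_one_sub_mul_self hη t ht] at hrep
  have h_neg_log : 0 ≤ -Real.log t := by linarith [Real.log_nonpos ht.le (by linarith)]
  calc -Real.log t = ‖((-Real.log t : ℝ) : ℂ)‖ := by rw [norm_real, Real.norm_of_nonneg h_neg_log]
    _ ≤ (-Real.log t + Real.pi) * μ.norm := by
      rw [hrep]
      refine μ.norm_integral_le fun ζ => norm_log_one_div_one_sub_le ht ht_half ?_
      rw [norm_mul, RCLike.norm_conj, norm_eq_of_mem_sphere ζ, one_mul, hz]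

lemma one_le_norm_of_repF0_logKernel {η : ℂ} (hη : ‖η‖ = 1) {μ : CircleMeasure}
    (hμ : RepF0 (logKernel η) μ) : 1 ≤ μ.norm := by
  refine one_le_of_forall_le_add_mul (a := Real.log 2) (c := Real.pi) fun L hL => ?_
  have ht_half : Real.exp (-L) ≤ 1 / 2 := by
    rw [Real.exp_neg, one_div]
    exact inv_anti₀ two_pos ((Real.log_le_iff_le_exp two_pos).mp hL)
  simpa using neg_log_le_mul_norm_of_repF0_logKernel hη hμ (Real.exp_pos (-L)) ht_half

lemma normF0_logKernel (η : sphere (0 : ℂ) 1) : normF0 (logKernel η) = 1 := by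
  have h_lower : ∀ c ∈ {c | ∃ μ : CircleMeasure, RepF0 (logKernel η) μ ∧ μ.norm = c}, 1 ≤ c := by
    rintro _ ⟨μ, hμ, rfl⟩
    exact one_le_norm_of_repF0_logKernel (norm_eq_of_mem_sphere η) hμ
  have h_dirac : 1 ∈ {c | ∃ μ : CircleMeasure, RepF0 (logKernel η) μ ∧ μ.norm = c} :=
    ⟨_, repF0_logKernel_dirac η, CircleMeasure.norm_dirac η⟩
  exact le_antisymm (csInf_le ⟨1, h_lower⟩ h_dirac) (le_csInf ⟨1, h_dirac⟩ h_lower)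

theorem stmt_3_general (ξ : ℂ) (hξ0 : ξ ≠ 0) :
    MemF0 (fun z => Complex.log (1 / (1 - z * (starRingEnd ℂ) ξ / (‖ξ‖ : ℂ)))) ∧
    normF0 (fun z => Complex.log (1 / (1 - z * (starRingEnd ℂ) ξ / (‖ξ‖ : ℂ)))) = 1 := by
  have hη : ξ / (‖ξ‖ : ℂ) ∈ sphere (0 : ℂ) 1 := by
    rw [mem_sphere_zero_iff_norm, norm_div, norm_real, norm_norm, div_self (norm_ne_zero_iff.mpr hξ0)]
  have h_eq : (fun z => log (1 / (1 - z * conj ξ / (‖ξ‖ : ℂ)))) = logKernel (ξ / (‖ξ‖ : ℂ)) := by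
    ext z
    rw [logKernel, map_div₀, conj_ofReal, div_mul_eq_mul_div, mul_comm (conj ξ)]
  rw [h_eq]
  exact ⟨memF0_logKernel ⟨_, hη⟩, normF0_logKernel ⟨_, hη⟩⟩

/-- For every `ξ` in the unit disk with `ξ ≠ 0`, the function
`z ↦ log(1/(1 - z · conj ξ / |ξ|))` belongs to `F₀` and has `F₀`-norm equal to `1`. -/
theorem stmt_3 (ξ : ℂ) (hξ : ξ ∈ ball (0:ℂ) 1) (hξ0 : ξ ≠ 0) :
    MemF0 (fun z => Complex.log (1 / (1 - z * (starRingEnd ℂ) ξ / (‖ξ‖ : ℂ)))) ∧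
    normF0 (fun z => Complex.log (1 / (1 - z * (starRingEnd ℂ) ξ / (‖ξ‖ : ℂ)))) = 1 :=
  stmt_3_general ξ hξ0
end
end

section
/- If f is an analytic function on the unit disk satisfying sup_{z ∈ D} |f'(z)|(1−|z|)log(1/(1−|z|)) < ∞ and f ∈ H^∞, then f is a multiplier of the Bloch space B. -/
/-!
Integrating `g'` along the radius from `0` to `z` shows that a Bloch function grows at most
logarithmically: `|g(z)| ≤ |g(0)| + C log (1/(1-|z|))`. In `(fg)' = f'g + fg'` the term `fg'` is
controlled by `‖f‖_∞` times the Bloch seminorm of `g`. For the term `f'g`, the growth bound splits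
`|f'(z)|(1-|z|)|g(z)|` into `|f'(z)|(1-|z|)|g(0)|`, bounded by the Cauchy estimate
`|f'(z)|(1-|z|) ≤ 2‖f‖_∞`, and `C |f'(z)|(1-|z|) log (1/(1-|z|))`, bounded by the hypothesis on `f`.
-/

open MeasureTheory Metric Set Complex

noncomputable section

/-- Membership in the Bloch space: analytic on the disk with
`sup |g'(z)|(1-|z|²) < ∞`. -/
def MemBloch (g : ℂ → ℂ) : Prop :=
  DifferentiableOn ℂ g (ball 0 1) ∧
    ∃ C : ℝ, ∀ z ∈ ball (0:ℂ) 1, ‖deriv g z‖ * (1 - ‖z‖ ^ 2) ≤ C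

lemma hasDerivAt_neg_log_one_sub_mul {r t : ℝ} (h : t * r < 1) :
    HasDerivAt (fun s => -Real.log (1 - s * r)) (r / (1 - t * r)) t := by
  have hlin : HasDerivAt (fun s : ℝ => 1 - s * r) (-r) t := by
    simpa using ((hasDerivAt_id t).mul_const r).const_sub 1
  simpa only [neg_div, neg_neg] using (hlin.log (by linarith)).fun_neg

lemma norm_sub_le_mul_log_of_norm_deriv_mul_le {g : ℂ → ℂ} (hg : DifferentiableOn ℂ g (ball 0 1))
    {C : ℝ} (hC : ∀ w ∈ ball (0:ℂ) 1, ‖deriv g w‖ * (1 - ‖w‖) ≤ C)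
    {z : ℂ} (hz : z ∈ ball (0:ℂ) 1) :
    ‖g z - g 0‖ ≤ C * Real.log (1 / (1 - ‖z‖)) := by
  set r := ‖z‖
  have hr : r < 1 := mem_ball_zero_iff.mp hz
  have htr : ∀ t ∈ Icc (0:ℝ) 1, t * r < 1 := fun t ht => by nlinarith [norm_nonneg z, ht.2]
  have hseg : ∀ t ∈ Icc (0:ℝ) 1, t • z ∈ ball (0:ℂ) 1 :=
    fun t ht => (convex_ball (0:ℂ) 1).smul_mem_of_zero_mem (mem_ball_self one_pos) hz ht
  have hnorm : ∀ t ∈ Icc (0:ℝ) 1, ‖t • z‖ = t * r := fun t ht => by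
    rw [norm_smul, Real.norm_of_nonneg ht.1]
  have hpath : ∀ t ∈ Icc (0:ℝ) 1,
      HasDerivAt (fun s : ℝ => g (s • z) - g 0) (z * deriv g (t • z)) t := by
    intro t ht
    have hgt := (hg.differentiableAt (isOpen_ball.mem_nhds (hseg t ht))).hasDerivAt
    have hline : HasDerivAt (fun s : ℝ => s • z) z t := by
      simpa using (hasDerivAt_id t).smul_const z
    simpa [Function.comp_def] using (hgt.scomp t hline).sub_const (g 0)
  have hbound : ∀ t ∈ Ico (0:ℝ) 1, ‖z * deriv g (t • z)‖ ≤ C * (r / (1 - t * r)) := by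
    intro t ht
    have ht' := Ico_subset_Icc_self ht
    have hd := hC (t • z) (hseg t ht')
    rw [hnorm t ht'] at hd
    rw [norm_mul, mul_div_assoc', le_div_iff₀ (by linarith [htr t ht']), mul_comm C r]
    nlinarith [norm_nonneg z]
  have hB : ∀ t ∈ Icc (0:ℝ) 1,
      HasDerivAt (fun s => C * -Real.log (1 - s * r)) (C * (r / (1 - t * r))) t :=
    fun t ht => (hasDerivAt_neg_log_one_sub_mul (htr t ht)).const_mul C
  have hcompare := image_norm_le_of_norm_deriv_right_le_deriv_boundary'
    (fun t ht => (hpath t ht).continuousAt.continuousWithinAt)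
    (fun t ht => (hpath t (Ico_subset_Icc_self ht)).hasDerivWithinAt) (by simp)
    (fun t ht => (hB t ht).continuousAt.continuousWithinAt)
    (fun t ht => (hB t (Ico_subset_Icc_self ht)).hasDerivWithinAt) hbound
    (right_mem_Icc.mpr zero_le_one)
  simpa [one_div, Real.log_inv] using hcompare

lemma norm_deriv_mul_one_sub_norm_le {f : ℂ → ℂ} (hf : DifferentiableOn ℂ f (ball 0 1)) {M : ℝ}
    (hM : ∀ w ∈ ball (0:ℂ) 1, ‖f w‖ ≤ M) {z : ℂ} (hz : z ∈ ball (0:ℂ) 1) :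
    ‖deriv f z‖ * (1 - ‖z‖) ≤ 2 * M := by
  have hR : 0 < 1 - ‖z‖ := by linarith [mem_ball_zero_iff.mp hz]
  have hsub : ball z (1 - ‖z‖) ⊆ ball (0:ℂ) 1 := ball_subset_ball' (by simp)
  have hmaps : MapsTo f (ball z (1 - ‖z‖)) (closedBall (f z) (2 * M)) := fun w hw => by
    rw [mem_closedBall, two_mul]
    exact (dist_le_norm_add_norm _ _).trans (add_le_add (hM w (hsub hw)) (hM z hz))
  exact (le_div_iff₀ hR).mp (norm_deriv_le_div_of_mapsTo_ball (hf.mono hsub) hmaps hR)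

lemma MemBloch.exists_norm_le_add_mul_log {g : ℂ → ℂ} (hg : MemBloch g) :
    ∃ C, 0 ≤ C ∧ ∀ z ∈ ball (0:ℂ) 1, ‖g z‖ ≤ ‖g 0‖ + C * Real.log (1 / (1 - ‖z‖)) := by
  obtain ⟨hgd, C, hC⟩ := hg
  have hC' : ∀ w ∈ ball (0:ℂ) 1, ‖deriv g w‖ * (1 - ‖w‖) ≤ C := fun w hw => by
    have hw1 : ‖w‖ ≤ 1 := (mem_ball_zero_iff.mp hw).le
    refine le_trans ?_ (hC w hw)
    gcongr
    nlinarith [norm_nonneg w]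
  refine ⟨C, le_trans (by simp) (hC' 0 (mem_ball_self one_pos)), fun z hz => ?_⟩
  have := norm_sub_le_mul_log_of_norm_deriv_mul_le hgd hC' hz
  linarith [norm_le_norm_add_norm_sub' (g z) (g 0)]

lemma MemBloch.exists_norm_deriv_mul_one_sub_norm_mul_norm_le {f g : ℂ → ℂ} (hg : MemBloch g)
    {M K : ℝ} (hM : ∀ z ∈ ball (0:ℂ) 1, ‖deriv f z‖ * (1 - ‖z‖) ≤ M)
    (hK : ∀ z ∈ ball (0:ℂ) 1, ‖deriv f z‖ * (1 - ‖z‖) * Real.log (1 / (1 - ‖z‖)) ≤ K) :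
    ∃ B, ∀ z ∈ ball (0:ℂ) 1, ‖deriv f z‖ * (1 - ‖z‖) * ‖g z‖ ≤ B := by
  obtain ⟨C, hC0, hgrowth⟩ := hg.exists_norm_le_add_mul_log
  refine ⟨M * ‖g 0‖ + C * K, fun z hz => ?_⟩
  have : 0 ≤ 1 - ‖z‖ := by linarith [mem_ball_zero_iff.mp hz]
  calc ‖deriv f z‖ * (1 - ‖z‖) * ‖g z‖
      ≤ ‖deriv f z‖ * (1 - ‖z‖) * (‖g 0‖ + C * Real.log (1 / (1 - ‖z‖))) := by
        gcongr
        exact hgrowth z hz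
    _ = ‖deriv f z‖ * (1 - ‖z‖) * ‖g 0‖
          + C * (‖deriv f z‖ * (1 - ‖z‖) * Real.log (1 / (1 - ‖z‖))) := by ring
    _ ≤ M * ‖g 0‖ + C * K := by
        gcongr ?_ * _ + _ * ?_
        · exact hM z hz
        · exact hK z hz

lemma norm_deriv_mul_mul_one_sub_sq_le {f g : ℂ → ℂ} {z : ℂ} (hf : DifferentiableAt ℂ f z)
    (hg : DifferentiableAt ℂ g z) (hz : ‖z‖ ≤ 1) :
    ‖deriv (fun w => f w * g w) z‖ * (1 - ‖z‖ ^ 2) ≤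
      2 * (‖deriv f z‖ * (1 - ‖z‖)) * ‖g z‖ + ‖f z‖ * (‖deriv g z‖ * (1 - ‖z‖ ^ 2)) := by
  have hsq : 1 - ‖z‖ ^ 2 ≤ 2 * (1 - ‖z‖) := by nlinarith [norm_nonneg z]
  have hsq0 : 0 ≤ 1 - ‖z‖ ^ 2 := by nlinarith [norm_nonneg z]
  calc ‖deriv (fun w => f w * g w) z‖ * (1 - ‖z‖ ^ 2)
      ≤ (‖deriv f z‖ * ‖g z‖ + ‖f z‖ * ‖deriv g z‖) * (1 - ‖z‖ ^ 2) := by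
        rw [deriv_fun_mul hf hg, ← norm_mul, ← norm_mul]
        gcongr
        exact norm_add_le _ _
    _ ≤ ‖deriv f z‖ * ‖g z‖ * (2 * (1 - ‖z‖)) + ‖f z‖ * ‖deriv g z‖ * (1 - ‖z‖ ^ 2) := by
        rw [add_mul]
        gcongr
    _ = _ := by ring

/-- If `f` is analytic on the disk, bounded, and satisfies
`sup |f'(z)|(1-|z|)log(1/(1-|z|)) < ∞`, then `f` multiplies the Bloch space. -/
theorem stmt_11 (f : ℂ → ℂ) (hf : DifferentiableOn ℂ f (ball 0 1))
    (hlog : ∃ C : ℝ, ∀ z ∈ ball (0:ℂ) 1,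
      ‖deriv f z‖ * (1 - ‖z‖) * Real.log (1 / (1 - ‖z‖)) ≤ C)
    (hbdd : ∃ C : ℝ, ∀ z ∈ ball (0:ℂ) 1, ‖f z‖ ≤ C) :
    ∀ g, MemBloch g → MemBloch (fun z => f z * g z) := by
  obtain ⟨K, hK⟩ := hlog
  obtain ⟨M, hM⟩ := hbdd
  intro g hg
  obtain ⟨B, hB⟩ := hg.exists_norm_deriv_mul_one_sub_norm_mul_norm_le
    (fun z hz => norm_deriv_mul_one_sub_norm_le hf hM hz) hK
  obtain ⟨hgd, Cg, hCg⟩ := hg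
  have hM0 : 0 ≤ M := (norm_nonneg _).trans (hM 0 (mem_ball_self one_pos))
  refine ⟨hf.mul hgd, 2 * B + M * Cg, fun z hz => ?_⟩
  have hz1 : ‖z‖ ≤ 1 := (mem_ball_zero_iff.mp hz).le
  have hfdg : ‖f z‖ * (‖deriv g z‖ * (1 - ‖z‖ ^ 2)) ≤ M * Cg :=
    mul_le_mul (hM z hz) (hCg z hz)
      (mul_nonneg (norm_nonneg _) (sub_nonneg.mpr (pow_le_one₀ (norm_nonneg z) hz1))) hM0
  have hprod := norm_deriv_mul_mul_one_sub_sq_le (hf.differentiableAt (isOpen_ball.mem_nhds hz))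
    (hgd.differentiableAt (isOpen_ball.mem_nhds hz)) hz1
  linarith [hB z hz]
end
end
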